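/- Let u ∈ L¹([0,T];ℝ₊) with ∫₀^T u(s) ds > 0 and let l:ℝ→(0,+∞) be continuous. If for every pair of real numbers a ≤ 0 ≤ b the backward integral equations L_t = a − ∫_t^T u(s) l(L_s) ds and U_t = b + ∫_t^T u(s) l(U_s) ds both admit bounded continuous solutions on [0,T], then l belongs to the class LS, i.e. ∫_{−∞}^0 dx/l(x) = ∫₀^{+∞} dx/l(x) = +∞. (Lemma 3.1, necessity direction.) -/

import Mathlib

/-! Separation of variables: a solution of `U' = -u · l(U)` on `[0, τ]` satisfies
`∫_{U τ}^{U 0} dx / l(x) = ∫_0^τ u`; rigorously, `G ∘ U` is absolutely continuous for a primitive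
`G` of `1 / l`, and the fundamental theorem of calculus applies to it. The upper solution with
terminal value `b ≥ 0` has `U τ ≥ b`, so beyond every `b ≥ 0` some bounded interval carries
`1 / l`-mass at least `∫_0^τ u > 0`, and `∫_0^∞ dx / l(x) = ∞`. The lower solutions give the same
for `x ↦ l (-x)`. -/

open MeasureTheory Set Filter Topology

noncomputable section

/-- The time interval `[0,T]`, where `0 < T ≤ +∞` is an extended real
(understood as `[0,+∞)` when `T = +∞`). -/
def timeSet (T : EReal) : Set ℝ := {s : ℝ | 0 ≤ s ∧ (s : EReal) ≤ T}

open scoped NNReal ENNReal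

theorem LipschitzOnWith.comp_absolutelyContinuousOnInterval {X Y : Type*} [PseudoMetricSpace X]
    [PseudoMetricSpace Y] {g : X → Y} {f : ℝ → X} {K : ℝ≥0} {s : Set X} {a b : ℝ}
    (hg : LipschitzOnWith K g s) (hf : AbsolutelyContinuousOnInterval f a b)
    (hfs : MapsTo f (uIcc a b) s) : AbsolutelyContinuousOnInterval (g ∘ f) a b := by
  rw [absolutelyContinuousOnInterval_iff] at hf ⊢
  intro ε hε
  obtain ⟨δ, hδ, hfδ⟩ := hf (ε / (K + 1)) (by positivity)
  refine ⟨δ, hδ, fun E hE hlen => ?_⟩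
  calc ∑ i ∈ Finset.range E.1, dist ((g ∘ f) (E.2 i).1) ((g ∘ f) (E.2 i).2)
      ≤ ∑ i ∈ Finset.range E.1, K * dist (f (E.2 i).1) (f (E.2 i).2) :=
        Finset.sum_le_sum fun i hi => hg.dist_le_mul _ (hfs (hE.1 i hi).1) _ (hfs (hE.1 i hi).2)
    _ = K * ∑ i ∈ Finset.range E.1, dist (f (E.2 i).1) (f (E.2 i).2) := (Finset.mul_sum ..).symm
    _ ≤ K * (ε / (K + 1)) := by gcongr; exact (hfδ E hE hlen).le
    _ < ε := by
      rw [mul_div_assoc', div_lt_iff₀ (by positivity)]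
      nlinarith

theorem integral_one_div_eq_integral_of_eq_add_integral {f l U : ℝ → ℝ} {a b : ℝ}
    (hl : Continuous l) (hl0 : ∀ x, l x ≠ 0) (hf : IntervalIntegrable f volume a b)
    (hU : ContinuousOn U (uIcc a b))
    (hUeq : ∀ t ∈ uIcc a b, U t = U a + ∫ s in a..t, f s * l (U s)) :
    ∫ x in U a..U b, 1 / l x = ∫ s in a..b, f s := by
  have hg : IntervalIntegrable (fun s => f s * l (U s)) volume a b :=
    hf.mul_continuousOn (hl.comp_continuousOn hU)
  set V : ℝ → ℝ := fun t => U a + ∫ s in a..t, f s * l (U s) with hV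
  set G : ℝ → ℝ := fun y => ∫ x in U a..y, 1 / l x with hG
  have hinv : Continuous fun x => 1 / l x := continuous_const.div hl hl0
  have hG_deriv : ∀ y, HasDerivAt G (1 / l y) y :=
    fun y => (hinv.integral_hasStrictDerivAt _ y).hasDerivAt
  have hG_C1 : ContDiff ℝ 1 G := by
    rw [contDiff_one_iff_deriv]
    refine ⟨fun y => (hG_deriv y).differentiableAt, ?_⟩
    rwa [show deriv G = fun y => 1 / l y from funext fun y => (hG_deriv y).deriv]
  have hV_ac : AbsolutelyContinuousOnInterval V a b :=
    (LipschitzWith.const (U a)).lipschitzOnWith.absolutelyContinuousOnInterval.add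
      (hg.absolutelyContinuousOnInterval_intervalIntegral left_mem_uIcc)
  obtain ⟨K, hK⟩ := hG_C1.locallyLipschitz.locallyLipschitzOn.exists_lipschitzOnWith_of_compact
    (isCompact_uIcc.image_of_continuousOn hV_ac.continuousOn)
  have hGV_ac := hK.comp_absolutelyContinuousOnInterval hV_ac (mapsTo_image _ _)
  have hderiv : ∀ᵐ x, x ∈ uIoc a b → deriv (G ∘ V) x = f x := by
    filter_upwards [hg.ae_hasDerivAt_integral] with x hx hxab
    have hx' : x ∈ uIcc a b := uIoc_subset_uIcc hxab
    rw [((hG_deriv (V x)).comp x ((hx hx' a left_mem_uIcc).const_add (U a))).deriv,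
      show V x = U x from (hUeq x hx').symm]
    field_simp [hl0 (U x)]
  calc ∫ x in U a..U b, 1 / l x = G (V b) - G (V a) := by
        simp only [hG, hV, intervalIntegral.integral_same, add_zero, sub_zero,
          ← hUeq b right_mem_uIcc]
    _ = ∫ x in a..b, deriv (G ∘ V) x := hGV_ac.integral_deriv_eq_sub.symm
    _ = ∫ s in a..b, f s := intervalIntegral.integral_congr_ae hderiv

lemma setLIntegral_Ici_eq_top_of_forall_le_setLIntegral_Ioc {f : ℝ → ℝ≥0∞} {a : ℝ} {δ : ℝ≥0∞}
    (hδ : δ ≠ 0) (h : ∀ b ≥ a, ∃ c, δ ≤ ∫⁻ x in Ioc b c, f x) :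
    ∫⁻ x in Ici a, f x = ⊤ := by
  have hmass : ∀ n : ℕ, ∃ b ≥ a, n * δ ≤ ∫⁻ x in Ioc a b, f x := by
    intro n
    induction n with
    | zero => exact ⟨a, le_rfl, by simp⟩
    | succ n ih =>
      obtain ⟨b, hab, hb⟩ := ih
      obtain ⟨c, hc⟩ := h b hab
      refine ⟨max b c, hab.trans (le_max_left _ _), ?_⟩
      calc ((n + 1 : ℕ) : ℝ≥0∞) * δ = n * δ + δ := by push_cast; ring
        _ ≤ (∫⁻ x in Ioc a b, f x) + ∫⁻ x in Ioc b c, f x := add_le_add hb hc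
        _ = ∫⁻ x in Ioc a b ∪ Ioc b c, f x :=
          (lintegral_union measurableSet_Ioc (Ioc_disjoint_Ioc_of_le le_rfl)).symm
        _ ≤ ∫⁻ x in Ioc a (max b c), f x := lintegral_mono_set (union_subset
          (Ioc_subset_Ioc_right (le_max_left _ _))
          (Ioc_subset_Ioc hab (le_max_right _ _)))
  refine top_unique ?_
  rw [← ENNReal.top_mul hδ, ← ENNReal.iSup_natCast, ENNReal.iSup_mul]
  refine iSup_le fun n => ?_
  obtain ⟨b, -, hb⟩ := hmass n
  exact hb.trans (lintegral_mono_set fun _ hx => mem_Ici.2 hx.1.le)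

lemma setLIntegral_Ici_comp_neg (f : ℝ → ℝ≥0∞) (c : ℝ) :
    ∫⁻ x in Ici c, f (-x) = ∫⁻ x in Iic (-c), f x := by
  have := (Measure.measurePreserving_neg volume).setLIntegral_comp_emb
    (Homeomorph.neg ℝ).measurableEmbedding f (Ici c)
  simpa [image_neg_Ici] using this

lemma ofReal_intervalIntegral_le_setLIntegral_Ioc {h : ℝ → ℝ} {p q : ℝ}
    (hint : IntegrableOn h (Ioc p q)) (h0 : ∀ x, 0 ≤ h x) :
    ENNReal.ofReal (∫ x in p..q, h x) ≤ ∫⁻ x in Ioc p q, ENNReal.ofReal (h x) := by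
  rcases le_or_gt p q with hpq | hqp
  · rw [intervalIntegral.integral_of_le hpq,
      ofReal_integral_eq_lintegral_ofReal hint (ae_of_all _ h0)]
  · rw [intervalIntegral.integral_of_ge hqp.le, ENNReal.ofReal_of_nonpos
      (neg_nonpos.2 (setIntegral_nonneg measurableSet_Ioc fun x _ => h0 x))]
    exact bot_le

lemma integrableOn_mul_comp_of_isBounded {S : Set ℝ} (hS : MeasurableSet S) {u U l : ℝ → ℝ}
    (hu : IntegrableOn u S) (hl : Continuous l) (hU : ContinuousOn U S)
    (hUb : ∃ M, ∀ t ∈ S, |U t| ≤ M) : IntegrableOn (fun s => u s * l (U s)) S := by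
  obtain ⟨M, hM⟩ := hUb
  obtain ⟨C, hC⟩ := isCompact_Icc.exists_bound_of_continuousOn (s := Icc (-M) M) hl.continuousOn
  exact hu.mul_bdd ((hl.comp_continuousOn hU).aestronglyMeasurable hS)
    (ae_restrict_of_forall_mem hS fun t ht => hC _ (abs_le.1 (hM t ht)))

lemma eq_sub_integral_of_eq_add_setIntegral_Ioi {S : Set ℝ} (hS : MeasurableSet S)
    {g V : ℝ → ℝ} {c t₀ t : ℝ} (hg : IntegrableOn g S)
    (hV : ∀ t ∈ S, V t = c + ∫ s in Ioi t ∩ S, g s) (ht : t₀ ≤ t) (hsub : Icc t₀ t ⊆ S) :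
    V t = V t₀ - ∫ s in t₀..t, g s := by
  have hIoc : Ioc t₀ t ⊆ S := Ioc_subset_Icc_self.trans hsub
  have hsplit : Ioi t₀ ∩ S = Ioc t₀ t ∪ (Ioi t ∩ S) := by
    ext s
    simp only [mem_inter_iff, mem_Ioi, mem_union, mem_Ioc]
    constructor
    · rintro ⟨hts, hs⟩
      rcases le_or_gt s t with hst | hst
      exacts [Or.inl ⟨hts, hst⟩, Or.inr ⟨hst, hs⟩]
    · rintro (hs | ⟨hts, hs⟩)
      exacts [⟨hs.1, hIoc hs⟩, ⟨ht.trans_lt hts, hs⟩]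
  rw [hV t (hsub (right_mem_Icc.2 ht)), hV t₀ (hsub (left_mem_Icc.2 ht)), hsplit,
    setIntegral_union (Ioc_disjoint_Ioi le_rfl |>.mono_right inter_subset_left)
      (measurableSet_Ioi.inter hS) (hg.mono_set hIoc) (hg.mono_set inter_subset_right),
    intervalIntegral.integral_of_le ht]
  ring

lemma setLIntegral_Ici_one_div_eq_top_of_solutions {S : Set ℝ} (hS : MeasurableSet S)
    {u l : ℝ → ℝ} {τ : ℝ} (hτ : 0 ≤ τ) (hsub : Icc 0 τ ⊆ S) (hu_nonneg : ∀ s ∈ S, 0 ≤ u s) (hu : IntegrableOn u S)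
    (hJ : 0 < ∫ s in 0..τ, u s) (hl : Continuous l) (hl_pos : ∀ x, 0 < l x)
    (hsol : ∀ b : ℝ, 0 ≤ b → ∃ U : ℝ → ℝ, ContinuousOn U S ∧ (∃ M, ∀ t ∈ S, |U t| ≤ M) ∧
      ∀ t ∈ S, U t = b + ∫ s in Ioi t ∩ S, u s * l (U s)) :
    ∫⁻ x in Ici 0, ENNReal.ofReal (1 / l x) = ⊤ := by
  refine setLIntegral_Ici_eq_top_of_forall_le_setLIntegral_Ioc (ENNReal.ofReal_pos.2 hJ).ne'
    fun b hb => ?_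
  obtain ⟨U, hUc, hUb, hU⟩ := hsol b hb
  have hint := integrableOn_mul_comp_of_isBounded hS hu hl hUc hUb
  have hbU : b ≤ U τ := by
    rw [hU τ (hsub (right_mem_Icc.2 hτ))]
    exact le_add_of_nonneg_right (setIntegral_nonneg (measurableSet_Ioi.inter hS)
      fun s hs => mul_nonneg (hu_nonneg s hs.2) (hl_pos _).le)
  have hsep : ∫ x in U τ..U 0, 1 / l x = ∫ s in 0..τ, u s := by
    have huIcc : uIcc 0 τ ⊆ S := uIcc_of_le hτ ▸ hsub
    have hsep' : ∫ x in U 0..U τ, 1 / l x = ∫ s in 0..τ, -u s := by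
      refine integral_one_div_eq_integral_of_eq_add_integral hl (fun x => (hl_pos x).ne')
        (hu.mono_set huIcc).intervalIntegrable.neg (hUc.mono huIcc) fun t ht => ?_
      rw [uIcc_of_le hτ] at ht
      simp only [neg_mul, intervalIntegral.integral_neg, ← sub_eq_add_neg]
      exact eq_sub_integral_of_eq_add_setIntegral_Ioi hS hint hU ht.1
        ((Icc_subset_Icc_right ht.2).trans hsub)
    rw [intervalIntegral.integral_symm, hsep', intervalIntegral.integral_neg, neg_neg]
  refine ⟨U 0, ?_⟩
  calc ENNReal.ofReal (∫ s in 0..τ, u s) = ENNReal.ofReal (∫ x in U τ..U 0, 1 / l x) := by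
        rw [hsep]
    _ ≤ ∫⁻ x in Ioc (U τ) (U 0), ENNReal.ofReal (1 / l x) :=
        ofReal_intervalIntegral_le_setLIntegral_Ioc
          (continuous_const.div hl fun x => (hl_pos x).ne').integrableOn_Ioc
          fun x => (one_div_pos.2 (hl_pos x)).le
    _ ≤ ∫⁻ x in Ioc b (U 0), ENNReal.ofReal (1 / l x) :=
        lintegral_mono_set (Ioc_subset_Ioc_left hbU)

lemma measurableSet_timeSet (T : EReal) : MeasurableSet (timeSet T) :=
  Set.OrdConnected.measurableSet
    ⟨fun _ hx _ hy _ hz => ⟨hx.1.trans hz.1, (EReal.coe_le_coe_iff.2 hz.2).trans hy.2⟩⟩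

lemma timeSet_coe (τ : ℝ) : timeSet τ = Icc 0 τ := by
  ext s
  simp [timeSet]

lemma timeSet_top : timeSet ⊤ = Ici 0 := by
  ext s
  simp [timeSet]

lemma exists_integral_pos_of_setIntegral_timeSet_pos {T : EReal} (hT : 0 < T) {u : ℝ → ℝ}
    (hu : IntegrableOn u (timeSet T)) (hpos : 0 < ∫ s in timeSet T, u s) :
    ∃ τ, 0 ≤ τ ∧ Icc 0 τ ⊆ timeSet T ∧ 0 < ∫ s in 0..τ, u s := by
  induction T using EReal.rec with
  | bot => exact absurd hT not_lt_bot
  | coe τ =>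
    have hτ : 0 ≤ τ := by exact_mod_cast hT.le
    rw [timeSet_coe] at hpos ⊢
    refine ⟨τ, hτ, subset_rfl, ?_⟩
    rwa [intervalIntegral.integral_of_le hτ, ← integral_Icc_eq_integral_Ioc]
  | top =>
    rw [timeSet_top] at hu hpos ⊢
    rw [integral_Ici_eq_integral_Ioi] at hpos
    have hlim := intervalIntegral_tendsto_integral_Ioi 0 (hu.mono_set Ioi_subset_Ici_self)
      tendsto_id
    obtain ⟨τ, hτ, hτpos⟩ := ((eventually_ge_atTop 0).and
      (hlim.eventually (eventually_gt_nhds hpos))).exists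
    exact ⟨τ, hτ, fun s hs => hs.1, hτpos⟩

/-- **Lemma 3.1, necessity direction.** Let `u ∈ L¹([0,T];ℝ₊)` with `∫₀^T u(s) ds > 0` and let
`l : ℝ → (0,∞)` be continuous.  If for every `a ≤ 0 ≤ b` the backward equations
`L_t = a - ∫_t^T u(s) l(L_s) ds` and `U_t = b + ∫_t^T u(s) l(U_s) ds` both admit bounded
continuous solutions on `[0,T]`, then `l` belongs to the class `LS`, i.e.
`∫_{-∞}^0 dx/l(x) = ∫_0^{+∞} dx/l(x) = +∞`. -/
theorem lemma_3_1_necessity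
    (T : EReal) (hT : 0 < T)
    (u : ℝ → ℝ)
    (hu_nonneg : ∀ s ∈ timeSet T, 0 ≤ u s)
    (hu_int : IntegrableOn u (timeSet T))
    (hu_pos : 0 < ∫ s in timeSet T, u s)
    (l : ℝ → ℝ) (hl_cont : Continuous l) (hl_pos : ∀ x, 0 < l x)
    (hsol : ∀ a b : ℝ, a ≤ 0 → 0 ≤ b →
      (∃ L : ℝ → ℝ, ContinuousOn L (timeSet T) ∧ (∃ M, ∀ t ∈ timeSet T, |L t| ≤ M) ∧
        ∀ t ∈ timeSet T, L t = a - ∫ s in Ioi t ∩ timeSet T, u s * l (L s)) ∧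
      (∃ U : ℝ → ℝ, ContinuousOn U (timeSet T) ∧ (∃ M, ∀ t ∈ timeSet T, |U t| ≤ M) ∧
        ∀ t ∈ timeSet T, U t = b + ∫ s in Ioi t ∩ timeSet T, u s * l (U s))) :
    (∫⁻ x in Iic (0 : ℝ), ENNReal.ofReal (1 / l x) = ⊤) ∧
    (∫⁻ x in Ici (0 : ℝ), ENNReal.ofReal (1 / l x) = ⊤) := by
  obtain ⟨τ, hτ, hsub, hJ⟩ := exists_integral_pos_of_setIntegral_timeSet_pos hT hu_int hu_pos
  have hS := measurableSet_timeSet T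
  constructor
  · -- `-L` solves the upper equation for the reflected rate `x ↦ l (-x)`
    rw [← neg_zero, ← setLIntegral_Ici_comp_neg]
    refine setLIntegral_Ici_one_div_eq_top_of_solutions hS hτ hsub hu_nonneg hu_int hJ
      (hl_cont.comp continuous_neg) (fun x => hl_pos _) fun b hb => ?_
    obtain ⟨L, hLc, ⟨M, hM⟩, hL⟩ := (hsol (-b) b (neg_nonpos.2 hb) hb).1
    refine ⟨fun t => -L t, hLc.neg, ⟨M, fun t ht => by simpa using hM t ht⟩, fun t ht => ?_⟩
    simp only [hL t ht, neg_neg]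
    ring
  · exact setLIntegral_Ici_one_div_eq_top_of_solutions hS hτ hsub hu_nonneg hu_int hJ hl_cont hl_pos
      fun b hb => (hsol (-b) b (neg_nonpos.2 hb) hb).2
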